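/- Consider the flat Lorentzian metric g = ε_i(dxⁱ)² with ε₁ = −1, ε₂ = ε₃ = ε₄ = +1 on a 4-dimensional manifold. The space of Jacobi fields along g for the Einstein–Hilbert Lagrangian whose components are homogeneous quadratic polynomials in the coordinates x¹,…,x⁴ is a vector space of dimension 90. -/

import Mathlib

/-!
Writing `V^{ab}(x) = Σ_{j,k} c(ab, jk) xʲxᵏ` with `c` symmetric in both index pairs identifies
the quadratic fields with a space of dimension `10 · 10 = 100`. Second derivatives of such a
field are constant, so the Jacobi equations become the `10` linear equations "linearized Ricci
tensor of `c` vanishes". These are independent: `xₖ² e_{ab}` with `k ∉ {a, b}` has linearized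
Ricci tensor `-εₖ e_{ab}`, and `xₖ² e_{jj}` has `-(εₖ e_{jj} + εⱼ e_{kk})`; combining three of
the latter isolates `e_{jj}`. The solution space therefore has dimension `100 - 10 = 90`.
-/

noncomputable section

open scoped BigOperators

/-- The Lorentzian signs `ε₁ = −1`, `ε₂ = ε₃ = ε₄ = +1`. -/
def εL : Fin 4 → ℝ := fun i => if i = 0 then -1 else 1

/-- Second partial derivative `∂²V^{ab}/∂xⁱ∂xʲ` of a vertical field
`V = Σ_{a≤b} V^{ab} ∂/∂y_{ab}` along the flat metric. -/
noncomputable def pd2V (V : (Fin 4 → ℝ) → Fin 4 → Fin 4 → ℝ)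
    (a b i j : Fin 4) (x : Fin 4 → ℝ) : ℝ :=
  fderiv ℝ (fun x' =>
    fderiv ℝ (fun x'' => V x'' a b) x' (Pi.single i 1)) x (Pi.single j 1)

/-- The Jacobi equations of the Einstein–Hilbert Lagrangian along the flat
Lorentzian metric `g = ε_i (dxⁱ)²`: the constant-coefficient system
`Σ_B P^A_B(D) U^B = 0`. -/
def IsJacobiFlat (V : (Fin 4 → ℝ) → Fin 4 → Fin 4 → ℝ) : Prop :=
  (∀ x a b, V x a b = V x b a) ∧
  ∀ (μ ν : Fin 4) (x : Fin 4 → ℝ),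
    (∑ i, εL i / 2 *
      (pd2V V ν i i μ x + pd2V V μ i i ν x
        - pd2V V i i μ ν x - pd2V V μ ν i i x)) = 0

/-- `V` has homogeneous quadratic polynomial components. -/
def IsQuadratic (V : (Fin 4 → ℝ) → Fin 4 → Fin 4 → ℝ) : Prop :=
  ∃ c : Fin 4 → Fin 4 → Fin 4 → Fin 4 → ℝ,
    ∀ x a b, V x a b = ∑ j, ∑ k, c a b j k * x j * x k

open Finset ContinuousLinearMap

theorem Submodule.exists_linearIndependent_span_eq_of_finrank_eq {K V : Type*} [DivisionRing K]
    [AddCommGroup V] [Module K V] (S : Submodule K V) [FiniteDimensional K S] {n : ℕ}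
    (h : Module.finrank K S = n) :
    ∃ B : Fin n → V, LinearIndependent K B ∧ span K (Set.range B) = S := by
  let b := Module.finBasisOfFinrankEq K S h
  refine ⟨S.subtype ∘ b, b.linearIndependent.map' _ S.ker_subtype, ?_⟩
  rw [Set.range_comp, span_image, b.span_eq, map_subtype_top]

theorem Fintype.exists_ne_ne_of_three_le_card {α : Type*} [Fintype α] [DecidableEq α]
    (h : 3 ≤ Fintype.card α) (a b : α) : ∃ k, k ≠ a ∧ k ≠ b := by
  obtain ⟨k, -, hk⟩ := exists_mem_notMem_of_card_lt_card (s := {a, b}) (t := univ)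
    (card_le_two.trans_lt (by rw [card_univ]; omega))
  exact ⟨k, by simpa [not_or] using hk⟩

namespace FlatJacobi

section Coefficients

variable {ι : Type*} [Fintype ι]

/-- The linearized Ricci tensor `R_{μν}` of the quadratic field with coefficients `c`: the
second derivatives of that field are the constants `2 c`. -/
def ricci (ε : ι → ℝ) (c : Sym2 ι × Sym2 ι → ℝ) (μ ν : ι) : ℝ :=
  ∑ i, ε i * (c (s(ν, i), s(i, μ)) + c (s(μ, i), s(i, ν))
    - c (s(i, i), s(μ, ν)) - c (s(μ, ν), s(i, i)))

theorem ricci_comm (ε : ι → ℝ) (c : Sym2 ι × Sym2 ι → ℝ) (μ ν : ι) :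
    ricci ε c μ ν = ricci ε c ν μ :=
  sum_congr rfl fun i _ => by rw [Sym2.eq_swap (a := ν) (b := μ)]; ring

def ricciLin (ε : ι → ℝ) : (Sym2 ι × Sym2 ι → ℝ) →ₗ[ℝ] (Sym2 ι → ℝ) where
  toFun c := Sym2.lift ⟨ricci ε c, ricci_comm ε c⟩
  map_add' c c' := by
    ext q; induction q using Sym2.ind
    simp only [Sym2.lift_mk, ricci, Pi.add_apply, ← sum_add_distrib]
    exact sum_congr rfl fun i _ => by ring
  map_smul' r c := by
    ext q; induction q using Sym2.ind
    simp only [Sym2.lift_mk, ricci, Pi.smul_apply, smul_eq_mul, RingHom.id_apply, mul_sum]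
    exact sum_congr rfl fun i _ => by ring

theorem ricciLin_mk (ε : ι → ℝ) (c : Sym2 ι × Sym2 ι → ℝ) (μ ν : ι) :
    ricciLin ε c s(μ, ν) = ricci ε c μ ν := rfl

variable [DecidableEq ι]

/-- Coefficients of the field `xₖ² T`. -/
def sqCoeff (k : ι) (T : Sym2 ι → ℝ) : Sym2 ι × Sym2 ι → ℝ :=
  fun pq => if pq.2 = s(k, k) then T pq.1 else 0

theorem ricciLin_sqCoeff (ε : ι → ℝ) (k : ι) (T : Sym2 ι → ℝ) (hT : ∀ μ, T s(μ, k) = 0) :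
    ricciLin ε (sqCoeff k T)
      = -ε k • T - (∑ i, ε i * T s(i, i)) • Pi.single s(k, k) 1 := by
  ext q; induction q using Sym2.ind with | _ μ ν => ?_
  simp only [ricciLin_mk, ricci, sqCoeff, Sym2.eq_iff]
  by_cases hμ : μ = k <;> by_cases hν : ν = k <;> subst_vars <;>
    simp_all [mul_ite]

variable {ε : ι → ℝ}

theorem single_mem_range_ricciLin_of_ne (hε : ∀ i, ε i ≠ 0) {a b k : ι} (hab : a ≠ b)
    (hka : k ≠ a) (hkb : k ≠ b) :
    Pi.single s(a, b) 1 ∈ LinearMap.range (ricciLin ε) := by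
  have hT : ∀ μ, (Pi.single s(a, b) 1 : Sym2 ι → ℝ) s(μ, k) = 0 := fun μ => by
    simp [hka.symm, hkb.symm]
  have htrace : ∑ i, ε i * (Pi.single s(a, b) 1 : Sym2 ι → ℝ) s(i, i) = 0 :=
    sum_eq_zero fun i _ => by simp [Pi.single_apply]; grind
  refine ⟨-(ε k)⁻¹ • sqCoeff k (Pi.single s(a, b) 1), ?_⟩
  rw [map_smul, ricciLin_sqCoeff ε k _ hT, htrace, zero_smul, sub_zero, smul_smul, neg_mul_neg,
    inv_mul_cancel₀ (hε k), one_smul]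

theorem smul_single_add_smul_single_mem_range_ricciLin {j k : ι} (hjk : j ≠ k) :
    ε k • Pi.single s(j, j) 1 + ε j • Pi.single s(k, k) 1 ∈ LinearMap.range (ricciLin ε) := by
  have hT : ∀ μ, (Pi.single s(j, j) 1 : Sym2 ι → ℝ) s(μ, k) = 0 := fun μ => by
    simp [hjk.symm]
  have htrace : ∑ i, ε i * (Pi.single s(j, j) 1 : Sym2 ι → ℝ) s(i, i) = ε j := by
    simp [Pi.single_apply]
  refine ⟨-sqCoeff k (Pi.single s(j, j) 1), ?_⟩
  rw [map_neg, ricciLin_sqCoeff ε k _ hT, htrace]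
  module

theorem single_diag_mem_range_ricciLin (hε : ∀ i, ε i ≠ 0) {j k l : ι} (hjk : j ≠ k)
    (hjl : j ≠ l) (hkl : k ≠ l) :
    Pi.single s(j, j) 1 ∈ LinearMap.range (ricciLin ε) := by
  have h := add_mem (add_mem
    (Submodule.smul_mem _ (ε l) (smul_single_add_smul_single_mem_range_ricciLin (ε := ε) hjk))
    (Submodule.smul_mem _ (ε k) (smul_single_add_smul_single_mem_range_ricciLin (ε := ε) hjl)))
    (Submodule.smul_mem _ (-ε j) (smul_single_add_smul_single_mem_range_ricciLin (ε := ε) hkl))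
  rw [show ε l • (ε k • Pi.single s(j, j) 1 + ε j • Pi.single s(k, k) 1)
      + ε k • (ε l • Pi.single s(j, j) 1 + ε j • Pi.single s(l, l) 1)
      + -ε j • (ε l • Pi.single s(k, k) 1 + ε k • Pi.single s(l, l) 1)
      = (2 * ε k * ε l) • (Pi.single s(j, j) 1 : Sym2 ι → ℝ) by module] at h
  exact (Submodule.smul_mem_iff _ (by simp [hε])).1 h

variable (ε) in
theorem range_ricciLin (hε : ∀ i, ε i ≠ 0) (hι : 3 ≤ Fintype.card ι) :
    LinearMap.range (ricciLin ε) = ⊤ := by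
  rw [eq_top_iff, ← (Pi.basisFun ℝ (Sym2 ι)).span_eq, Submodule.span_le]
  rintro _ ⟨p, rfl⟩
  induction p using Sym2.ind with | _ a b => ?_
  rw [Pi.basisFun_apply]
  obtain ⟨k, hka, hkb⟩ := Fintype.exists_ne_ne_of_three_le_card hι a b
  rcases eq_or_ne a b with rfl | hab
  · obtain ⟨l, hla, hlk⟩ := Fintype.exists_ne_ne_of_three_le_card hι a k
    exact single_diag_mem_range_ricciLin hε hka.symm hla.symm hlk.symm
  · exact single_mem_range_ricciLin_of_ne hε hab hka hkb

variable (ε) in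
theorem finrank_ker_ricciLin_add_card (hε : ∀ i, ε i ≠ 0) (hι : 3 ≤ Fintype.card ι) :
    Module.finrank ℝ (LinearMap.ker (ricciLin ε)) + Fintype.card (Sym2 ι)
      = Fintype.card (Sym2 ι) * Fintype.card (Sym2 ι) := by
  have h := LinearMap.finrank_range_add_finrank_ker (ricciLin ε)
  rw [range_ricciLin ε hε hι, finrank_top, Module.finrank_fintype_fun_eq_card,
    Module.finrank_fintype_fun_eq_card, Fintype.card_prod] at h
  omega

end Coefficients

section Fields

variable {ι : Type*} [Fintype ι]

/-- The field `V^{ab}(x) = Σ_{j,k} c(s(a,b), s(j,k)) xʲxᵏ`; for `j ≠ k` the monomial `xʲxᵏ` thus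
has coefficient `2 c(s(a,b), s(j,k))`. -/
def quadField : (Sym2 ι × Sym2 ι → ℝ) →ₗ[ℝ] ((ι → ℝ) → ι → ι → ℝ) where
  toFun c x a b := ∑ j, ∑ k, c (s(a, b), s(j, k)) * x j * x k
  map_add' c c' := by
    ext x a b
    simp only [Pi.add_apply, add_mul, sum_add_distrib]
  map_smul' r c := by
    ext x a b
    simp only [Pi.smul_apply, smul_eq_mul, RingHom.id_apply, mul_sum, mul_assoc]

theorem fderiv_quadratic_apply (A : ι → ι → ℝ) (y u : ι → ℝ) :
    fderiv ℝ (fun z : ι → ℝ => ∑ j, ∑ k, A j k * z j * z k) y u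
      = ∑ j, ∑ k, A j k * (u j * y k + y j * u k) := by
  have h : HasFDerivAt (fun z : ι → ℝ => ∑ j, ∑ k, A j k * z j * z k)
      (∑ j, ∑ k, ((A j k * y j) • proj k + y k • A j k • proj j : (ι → ℝ) →L[ℝ] ℝ)) y :=
    HasFDerivAt.fun_sum fun j _ => HasFDerivAt.fun_sum fun k _ =>
      ((hasFDerivAt_apply j _).const_mul (A j k)).mul (hasFDerivAt_apply k _)
  rw [h.fderiv]
  simp only [_root_.sum_apply, add_apply, smul_apply, proj_apply, smul_eq_mul]
  exact sum_congr rfl fun j _ => sum_congr rfl fun k _ => by ring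

theorem fderiv_fderiv_quadratic_apply (A : ι → ι → ℝ) (x u v : ι → ℝ) :
    fderiv ℝ (fun y => fderiv ℝ (fun z : ι → ℝ => ∑ j, ∑ k, A j k * z j * z k) y u) x v
      = ∑ j, ∑ k, A j k * (u j * v k + v j * u k) := by
  simp only [fderiv_quadratic_apply]
  have h : HasFDerivAt (fun y : ι → ℝ => ∑ j, ∑ k, A j k * (u j * y k + y j * u k))
      (∑ j, ∑ k, (A j k • (u j • proj k + u k • proj j) : (ι → ℝ) →L[ℝ] ℝ)) x :=
    HasFDerivAt.fun_sum fun j _ => HasFDerivAt.fun_sum fun k _ =>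
      (((hasFDerivAt_apply k _).const_mul (u j)).add
        ((hasFDerivAt_apply j _).mul_const (u k))).const_mul (A j k)
  rw [h.fderiv]
  simp only [_root_.sum_apply, smul_apply, add_apply, proj_apply, smul_eq_mul]
  exact sum_congr rfl fun j _ => sum_congr rfl fun k _ => by ring

end Fields

theorem pd2V_quadField (c : Sym2 (Fin 4) × Sym2 (Fin 4) → ℝ) (a b i j : Fin 4) (x : Fin 4 → ℝ) :
    pd2V (quadField c) a b i j x = 2 * c (s(a, b), s(i, j)) := by
  rw [pd2V, quadField, LinearMap.coe_mk, AddHom.coe_mk, fderiv_fderiv_quadratic_apply]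
  simp [Pi.single_apply, mul_add, sum_add_distrib, mul_ite, Sym2.eq_swap (a := j), two_mul]

theorem jacobiSum_quadField (c : Sym2 (Fin 4) × Sym2 (Fin 4) → ℝ) (μ ν : Fin 4) (x : Fin 4 → ℝ) :
    ∑ i, εL i / 2 * (pd2V (quadField c) ν i i μ x + pd2V (quadField c) μ i i ν x
      - pd2V (quadField c) i i μ ν x - pd2V (quadField c) μ ν i i x)
      = ricciLin εL c s(μ, ν) := by
  simp only [pd2V_quadField, ricciLin_mk, ricci]
  exact sum_congr rfl fun i _ => by ring

theorem isJacobiFlat_quadField_iff (c : Sym2 (Fin 4) × Sym2 (Fin 4) → ℝ) :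
    IsJacobiFlat (quadField c) ↔ ricciLin εL c = 0 := by
  refine ⟨fun h => ?_, fun h => ⟨fun x a b => ?_, fun μ ν x => ?_⟩⟩
  · ext q
    induction q using Sym2.ind with | _ μ ν => ?_
    rw [← jacobiSum_quadField c μ ν 0]
    exact h.2 μ ν 0
  · simp only [quadField, LinearMap.coe_mk, AddHom.coe_mk, Sym2.eq_swap (a := a)]
  · rw [jacobiSum_quadField, h, Pi.zero_apply]

theorem quadField_injective : Function.Injective (quadField (ι := Fin 4)) := by
  intro c₁ c₂ h
  ext ⟨p, q⟩
  induction p using Sym2.ind with | _ a b => ?_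
  induction q using Sym2.ind with | _ i j => ?_
  have := congrArg (fun V => pd2V V a b i j 0) h
  simpa only [pd2V_quadField, mul_eq_mul_left_iff, two_ne_zero, or_false] using this

theorem exists_quadField_eq {V : (Fin 4 → ℝ) → Fin 4 → Fin 4 → ℝ}
    (hsymm : ∀ x a b, V x a b = V x b a) (hV : IsQuadratic V) : ∃ c, quadField c = V := by
  obtain ⟨d, hd⟩ := hV
  have hd_swap : ∀ x a b, ∑ j, ∑ k, d a b k j * x j * x k = V x a b := fun x a b => by
    rw [hd, sum_comm]
    exact sum_congr rfl fun j _ => sum_congr rfl fun k _ => by ring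
  let c : Sym2 (Fin 4) × Sym2 (Fin 4) → ℝ := fun pq => Sym2.lift₂
    ⟨fun a b j k => (d a b j k + d a b k j + d b a j k + d b a k j) / 4,
      fun _ _ _ _ => ⟨by ring, by ring⟩⟩ pq.1 pq.2
  refine ⟨c, funext fun x => funext fun a => funext fun b => ?_⟩
  calc quadField c x a b
      = ((∑ j, ∑ k, d a b j k * x j * x k) + (∑ j, ∑ k, d a b k j * x j * x k)
          + (∑ j, ∑ k, d b a j k * x j * x k) + (∑ j, ∑ k, d b a k j * x j * x k)) / 4 := by
        simp only [quadField, LinearMap.coe_mk, AddHom.coe_mk, c, Sym2.lift₂_mk, ← sum_add_distrib,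
          sum_div]
        exact sum_congr rfl fun j _ => sum_congr rfl fun k _ => by ring
    _ = V x a b := by rw [← hd, hd_swap, ← hd, hd_swap, hsymm x b a]; ring

def jacobiQuadratic : Submodule ℝ ((Fin 4 → ℝ) → Fin 4 → Fin 4 → ℝ) :=
  (LinearMap.ker (ricciLin εL)).map quadField

instance : FiniteDimensional ℝ jacobiQuadratic :=
  Module.Finite.map _ _

theorem mem_jacobiQuadratic_iff {V : (Fin 4 → ℝ) → Fin 4 → Fin 4 → ℝ} :
    V ∈ jacobiQuadratic ↔ IsJacobiFlat V ∧ IsQuadratic V := by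
  constructor
  · rintro ⟨c, hc, rfl⟩
    exact ⟨(isJacobiFlat_quadField_iff c).2 hc,
      ⟨fun a b j k => c (s(a, b), s(j, k)), fun _ _ _ => rfl⟩⟩
  · rintro ⟨hJ, hQ⟩
    obtain ⟨c, rfl⟩ := exists_quadField_eq hJ.1 hQ
    exact ⟨c, (isJacobiFlat_quadField_iff c).1 hJ, rfl⟩

theorem finrank_jacobiQuadratic : Module.finrank ℝ jacobiQuadratic = 90 := by
  have hε : ∀ i, εL i ≠ 0 := fun i => by unfold εL; split_ifs <;> norm_num
  have h := finrank_ker_ricciLin_add_card εL hε (by simp)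
  rw [Sym2.card, Fintype.card_fin] at h
  rw [jacobiQuadratic, ← (Submodule.equivMapOfInjective _ quadField_injective _).finrank_eq]
  norm_num [Nat.choose] at h
  omega

end FlatJacobi

/-- Example 7.1: for the flat Lorentzian metric
`g = ε_i(dxⁱ)²` on a `4`-dimensional base, the space of Jacobi fields of the
Einstein–Hilbert Lagrangian along `g` whose components are homogeneous quadratic
polynomials in `x¹,…,x⁴` is a vector space of dimension `90`. -/
theorem statement19 :
    ∃ B : Fin 90 → ((Fin 4 → ℝ) → Fin 4 → Fin 4 → ℝ),
      (∀ k, IsJacobiFlat (B k) ∧ IsQuadratic (B k)) ∧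
      LinearIndependent ℝ B ∧
      ∀ V : (Fin 4 → ℝ) → Fin 4 → Fin 4 → ℝ,
        IsJacobiFlat V → IsQuadratic V →
        V ∈ Submodule.span ℝ (Set.range B) := by
  obtain ⟨B, hB, hspan⟩ := FlatJacobi.jacobiQuadratic.exists_linearIndependent_span_eq_of_finrank_eq
    FlatJacobi.finrank_jacobiQuadratic
  refine ⟨B, fun k => FlatJacobi.mem_jacobiQuadratic_iff.1 ?_, hB, fun V hJ hQ => ?_⟩
  · exact hspan ▸ Submodule.subset_span ⟨k, rfl⟩
  · exact hspan ▸ FlatJacobi.mem_jacobiQuadratic_iff.2 ⟨hJ, hQ⟩
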